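/- (Theorem 1, exact decomposition.) Let Y and X_0, X_1, …, X_n be jointly distributed random variables on finite sets. For θ ∈ {0,1,…,n} define g₁(θ) = H_L(Y|X_0) + Σ_{k=0}^{θ−1} I_L(Y; X_k | X_{k+1}) and g₂(θ) = Σ_{k=0}^{θ−1} I_L(Y; X_{k+1} | X_k). Then H_L(Y|X_θ) = g₁(θ) − g₂(θ) for every θ, and both g₁ and g₂ are nondecreasing functions of θ. -/

import Mathlib

open Finset

open Classical in
/-- Probability of an event under a pmf `p` on a finite sample space. -/
noncomputable def pr {Ω : Type*} [Fintype Ω] (p : Ω → ℝ) (E : Ω → Prop) : ℝ :=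
  ∑ ω, if E ω then p ω else 0

/-- Conditional distribution of a random variable `Y` given an event `E`. -/
noncomputable def condDist {Ω 𝒴 : Type*} [Fintype Ω] (p : Ω → ℝ) (Y : Ω → 𝒴)
    (E : Ω → Prop) : 𝒴 → ℝ :=
  fun y => pr p (fun ω => Y ω = y ∧ E ω) / pr p E

/-- Expected loss `E_{Y∼P}[L(Y,a)]`. -/
noncomputable def expLoss {𝒴 𝒜 : Type*} [Fintype 𝒴] (L : 𝒴 → 𝒜 → ℝ) (P : 𝒴 → ℝ)
    (a : 𝒜) : ℝ :=
  ∑ y, P y * L y a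

/-- The `L`-entropy `H_L(P) = min_{a∈𝒜} E_{Y∼P}[L(Y,a)]`. -/
noncomputable def Lentropy {𝒴 𝒜 : Type*} [Fintype 𝒴] (L : 𝒴 → 𝒜 → ℝ) (P : 𝒴 → ℝ) : ℝ :=
  ⨅ a : 𝒜, expLoss L P a

/-- The `L`-conditional entropy `H_L(Y|X) = Σ_x P_X(x) H_L(P_{Y|X=x})`. -/
noncomputable def LcondEntropy {Ω 𝒳 𝒴 𝒜 : Type*} [Fintype Ω] [Fintype 𝒳] [Fintype 𝒴]
    (L : 𝒴 → 𝒜 → ℝ) (p : Ω → ℝ) (Y : Ω → 𝒴) (X : Ω → 𝒳) : ℝ :=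
  ∑ x, pr p (fun ω => X ω = x) * Lentropy L (condDist p Y (fun ω => X ω = x))

/-- `b` selects, for every probability mass function `P` on `𝒴`, a Bayes action `b P`. -/
def IsBayesSelector {𝒴 𝒜 : Type*} [Fintype 𝒴] (L : 𝒴 → 𝒜 → ℝ) (b : (𝒴 → ℝ) → 𝒜) : Prop :=
  ∀ P : 𝒴 → ℝ, (∀ y, 0 ≤ P y) → (∑ y, P y) = 1 →
    ∀ a : 𝒜, expLoss L P (b P) ≤ expLoss L P a

/-- The `L`-divergence `D_L(P‖Q) = E_{Y∼P}[L(Y,a_Q)] − E_{Y∼P}[L(Y,a_P)]`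
for the choice `a_P = b P`, `a_Q = b Q` of Bayes actions. -/
noncomputable def Ldiv {𝒴 𝒜 : Type*} [Fintype 𝒴] (L : 𝒴 → 𝒜 → ℝ) (b : (𝒴 → ℝ) → 𝒜)
    (P Q : 𝒴 → ℝ) : ℝ :=
  expLoss L P (b Q) - expLoss L P (b P)

/-- The `L`-conditional mutual information
`I_L(Y;Z|X) = Σ_{x,z} P_{X,Z}(x,z) D_L(P_{Y|X=x,Z=z} ‖ P_{Y|X=x})`. -/
noncomputable def LCMI {Ω 𝒳 𝒴 𝒵 𝒜 : Type*} [Fintype Ω] [Fintype 𝒳] [Fintype 𝒴]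
    [Fintype 𝒵] (L : 𝒴 → 𝒜 → ℝ) (b : (𝒴 → ℝ) → 𝒜) (p : Ω → ℝ)
    (Y : Ω → 𝒴) (Z : Ω → 𝒵) (X : Ω → 𝒳) : ℝ :=
  ∑ x, ∑ z, pr p (fun ω => X ω = x ∧ Z ω = z) *
    Ldiv L b (condDist p Y (fun ω => X ω = x ∧ Z ω = z))
      (condDist p Y (fun ω => X ω = x))

/-!
Fix two features `X` and `Z`. Conditionally on `X = x`, the expected loss of the Bayes action
for `x` splits over the slices `Z = z`; comparing it on each slice with that slice's own Bayes
action gives the chain rule `H_L(Y|X) = H_L(Y|X,Z) + I_L(Y;Z|X)`. As `H_L(Y|X,Z)` is symmetric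
in `X` and `Z`, `H_L(Y|X_{k+1}) = H_L(Y|X_k) + I_L(Y;X_k|X_{k+1}) − I_L(Y;X_{k+1}|X_k)`, which
telescopes to the decomposition. Both sums are nondecreasing because every `L`-divergence is
nonnegative, by optimality of the Bayes actions.
-/

section

variable {Ω 𝒳 𝒳' 𝒴 𝒵 𝒜 : Type*} [Fintype Ω]

section pr

variable (p : Ω → ℝ)

lemma pr_nonneg (hp : ∀ ω, 0 ≤ p ω) (E : Ω → Prop) : 0 ≤ pr p E :=
  sum_nonneg fun ω _ => by split_ifs <;> simp [hp ω]

lemma pr_congr {E F : Ω → Prop} (h : ∀ ω, E ω ↔ F ω) : pr p E = pr p F :=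
  congrArg (pr p) (funext fun ω => propext (h ω))

lemma pr_mono (hp : ∀ ω, 0 ≤ p ω) {E F : Ω → Prop} (h : ∀ ω, E ω → F ω) :
    pr p E ≤ pr p F :=
  sum_le_sum fun ω _ => by
    by_cases hE : E ω
    · simp [hE, h ω hE]
    · simp only [hE, if_false]; split_ifs <;> simp [hp ω]

lemma sum_pr_and_eq [Fintype 𝒵] (E : Ω → Prop) (Z : Ω → 𝒵) :
    ∑ z, pr p (fun ω => E ω ∧ Z ω = z) = pr p E := by
  classical
  unfold pr
  rw [sum_comm]
  refine sum_congr rfl fun ω _ => ?_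
  by_cases hE : E ω <;> simp [hE]

end pr

section condDist

variable (p : Ω → ℝ) (Y : Ω → 𝒴)

lemma condDist_nonneg (hp : ∀ ω, 0 ≤ p ω) (E : Ω → Prop) (y : 𝒴) :
    0 ≤ condDist p Y E y :=
  div_nonneg (pr_nonneg p hp _) (pr_nonneg p hp _)

lemma pr_mul_condDist (hp : ∀ ω, 0 ≤ p ω) (E : Ω → Prop) (y : 𝒴) :
    pr p E * condDist p Y E y = pr p (fun ω => Y ω = y ∧ E ω) := by
  by_cases h : pr p E = 0
  · have hyE : pr p (fun ω => Y ω = y ∧ E ω) = 0 :=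
      le_antisymm (h ▸ pr_mono p hp fun ω hω => hω.2) (pr_nonneg p hp _)
    simp [h, hyE]
  · rw [condDist, mul_div_cancel₀ _ h]

lemma sum_condDist [Fintype 𝒴] {E : Ω → Prop} (h : pr p E ≠ 0) :
    ∑ y, condDist p Y E y = 1 := by
  simp only [condDist, ← sum_div]
  rw [div_eq_one_iff_eq h, ← sum_pr_and_eq p E Y]
  exact sum_congr rfl fun y _ => pr_congr p fun ω => and_comm

end condDist

section Lentropy

variable [Fintype 𝒴] (L : 𝒴 → 𝒜 → ℝ) (b : (𝒴 → ℝ) → 𝒜) (hb : IsBayesSelector L b)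
include hb

lemma Lentropy_eq_expLoss {P : 𝒴 → ℝ} (hP : ∀ y, 0 ≤ P y) (hP1 : ∑ y, P y = 1) :
    Lentropy L P = expLoss L P (b P) :=
  IsLeast.csInf_eq ⟨⟨b P, rfl⟩, by rintro _ ⟨a, rfl⟩; exact hb P hP hP1 a⟩

/-- On a null event the weight vanishes, so the junk value of `condDist` does not matter. -/
lemma pr_mul_Lentropy_condDist (p : Ω → ℝ) (hp : ∀ ω, 0 ≤ p ω) (Y : Ω → 𝒴) (E : Ω → Prop) :
    pr p E * Lentropy L (condDist p Y E)
      = pr p E * expLoss L (condDist p Y E) (b (condDist p Y E)) := by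
  by_cases h : pr p E = 0
  · simp [h]
  · rw [Lentropy_eq_expLoss L b hb (condDist_nonneg p Y hp E) (sum_condDist p Y h)]

lemma LCMI_nonneg [Fintype 𝒳] [Fintype 𝒵] (p : Ω → ℝ) (hp : ∀ ω, 0 ≤ p ω) (Y : Ω → 𝒴)
    (Z : Ω → 𝒵) (X : Ω → 𝒳) : 0 ≤ LCMI L b p Y Z X := by
  refine sum_nonneg fun x _ => sum_nonneg fun z _ => ?_
  by_cases h : pr p (fun ω => X ω = x ∧ Z ω = z) = 0
  · simp [h]
  · exact mul_nonneg (pr_nonneg p hp _)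
      (sub_nonneg.2 (hb _ (condDist_nonneg p Y hp _) (sum_condDist p Y h) _))

end Lentropy

section LcondEntropy

variable [Fintype 𝒳] [Fintype 𝒴] [Fintype 𝒵] (L : 𝒴 → 𝒜 → ℝ) (p : Ω → ℝ) (Y : Ω → 𝒴)

lemma sum_pr_mul_expLoss_condDist (hp : ∀ ω, 0 ≤ p ω) (E : Ω → Prop) (Z : Ω → 𝒵) (a : 𝒜) :
    ∑ z, pr p (fun ω => E ω ∧ Z ω = z) * expLoss L (condDist p Y (fun ω => E ω ∧ Z ω = z)) a
      = pr p E * expLoss L (condDist p Y E) a := by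
  simp only [expLoss, mul_sum, ← mul_assoc, pr_mul_condDist p Y hp]
  rw [sum_comm]
  refine sum_congr rfl fun y _ => ?_
  rw [← sum_mul, ← sum_pr_and_eq p (fun ω => Y ω = y ∧ E ω) Z]
  exact congrArg (· * L y a) (sum_congr rfl fun z _ => pr_congr p fun ω => and_assoc.symm)

lemma LcondEntropy_comp_equiv [Fintype 𝒳'] (e : 𝒳 ≃ 𝒳') (X : Ω → 𝒳) :
    LcondEntropy L p Y (fun ω => e (X ω)) = LcondEntropy L p Y X := by
  unfold LcondEntropy
  rw [← e.sum_comp]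
  simp only [e.apply_eq_iff_eq]

lemma LcondEntropy_prod_comm (X : Ω → 𝒳) (Z : Ω → 𝒵) :
    LcondEntropy L p Y (fun ω => (X ω, Z ω)) = LcondEntropy L p Y (fun ω => (Z ω, X ω)) :=
  LcondEntropy_comp_equiv L p Y (Equiv.prodComm 𝒵 𝒳) fun ω => (Z ω, X ω)

lemma LcondEntropy_prod (X : Ω → 𝒳) (Z : Ω → 𝒵) :
    LcondEntropy L p Y (fun ω => (X ω, Z ω))
      = ∑ x, ∑ z, pr p (fun ω => X ω = x ∧ Z ω = z) *
          Lentropy L (condDist p Y (fun ω => X ω = x ∧ Z ω = z)) := by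
  simp only [LcondEntropy, Fintype.sum_prod_type, Prod.mk.injEq]

variable (b : (𝒴 → ℝ) → 𝒜) (hb : IsBayesSelector L b) (hp : ∀ ω, 0 ≤ p ω)
include hb hp

lemma LcondEntropy_eq_LcondEntropy_prod_add_LCMI (X : Ω → 𝒳) (Z : Ω → 𝒵) :
    LcondEntropy L p Y X = LcondEntropy L p Y (fun ω => (X ω, Z ω)) + LCMI L b p Y Z X := by
  rw [LcondEntropy_prod, LCMI, ← sum_add_distrib, LcondEntropy]
  refine sum_congr rfl fun x _ => ?_
  simp only [← sum_add_distrib, pr_mul_Lentropy_condDist L b hb p hp, Ldiv, ← mul_add,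
    add_sub_cancel, sum_pr_mul_expLoss_condDist L p Y hp]

lemma LcondEntropy_eq_add_LCMI_sub_LCMI (X₁ X₂ : Ω → 𝒳) :
    LcondEntropy L p Y X₂
      = LcondEntropy L p Y X₁ + LCMI L b p Y X₁ X₂ - LCMI L b p Y X₂ X₁ := by
  have h₁ := LcondEntropy_eq_LcondEntropy_prod_add_LCMI L p Y b hb hp X₁ X₂
  have h₂ := LcondEntropy_eq_LcondEntropy_prod_add_LCMI L p Y b hb hp X₂ X₁
  rw [LcondEntropy_prod_comm] at h₂
  linarith

lemma LcondEntropy_eq_add_sum_LCMI_sub_sum_LCMI (X : ℕ → Ω → 𝒳) (θ : ℕ) :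
    LcondEntropy L p Y (X θ)
      = LcondEntropy L p Y (X 0) + ∑ k ∈ range θ, LCMI L b p Y (X k) (X (k + 1))
        - ∑ k ∈ range θ, LCMI L b p Y (X (k + 1)) (X k) := by
  induction θ with
  | zero => simp
  | succ k ih =>
    rw [sum_range_succ, sum_range_succ,
      LcondEntropy_eq_add_LCMI_sub_LCMI L p Y b hb hp (X k) (X (k + 1)), ih]
    ring

end LcondEntropy

end

theorem condEntropy_decomposition_general {Ω 𝒳 𝒴 𝒜 : Type*} [Fintype Ω] [Fintype 𝒳]
    [Fintype 𝒴]
    (L : 𝒴 → 𝒜 → ℝ) (b : (𝒴 → ℝ) → 𝒜) (hb : IsBayesSelector L b)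
    (p : Ω → ℝ) (hp : ∀ ω, 0 ≤ p ω)
    (Y : Ω → 𝒴) (X : ℕ → Ω → 𝒳) (n : ℕ) :
    (∀ θ ≤ n,
      LcondEntropy L p Y (X θ)
        = (LcondEntropy L p Y (X 0)
            + ∑ k ∈ Finset.range θ, LCMI L b p Y (X k) (X (k + 1)))
          - ∑ k ∈ Finset.range θ, LCMI L b p Y (X (k + 1)) (X k))
    ∧ (∀ θ₁ θ₂, θ₁ ≤ θ₂ → θ₂ ≤ n →
        LcondEntropy L p Y (X 0)
            + ∑ k ∈ Finset.range θ₁, LCMI L b p Y (X k) (X (k + 1))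
          ≤ LcondEntropy L p Y (X 0)
            + ∑ k ∈ Finset.range θ₂, LCMI L b p Y (X k) (X (k + 1)))
    ∧ (∀ θ₁ θ₂, θ₁ ≤ θ₂ → θ₂ ≤ n →
        ∑ k ∈ Finset.range θ₁, LCMI L b p Y (X (k + 1)) (X k)
          ≤ ∑ k ∈ Finset.range θ₂, LCMI L b p Y (X (k + 1)) (X k)) := by
  have hI : ∀ k, 0 ≤ LCMI L b p Y (X k) (X (k + 1)) ∧ 0 ≤ LCMI L b p Y (X (k + 1)) (X k) :=
    fun k => ⟨LCMI_nonneg L b hb p hp Y _ _, LCMI_nonneg L b hb p hp Y _ _⟩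
  refine ⟨fun θ _ => ?_, fun θ₁ θ₂ h _ => ?_, fun θ₁ θ₂ h _ => ?_⟩
  · exact LcondEntropy_eq_add_sum_LCMI_sub_sum_LCMI L p Y b hb hp X θ
  · exact (add_le_add_iff_left _).2 (sum_le_sum_of_subset_of_nonneg (range_subset_range.2 h)
      fun k _ _ => (hI k).1)
  · exact sum_le_sum_of_subset_of_nonneg (range_subset_range.2 h) fun k _ _ => (hI k).2

/-- Theorem 1, exact decomposition.  With
`g₁(θ) = H_L(Y|X_0) + Σ_{k<θ} I_L(Y;X_k|X_{k+1})` and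
`g₂(θ) = Σ_{k<θ} I_L(Y;X_{k+1}|X_k)`, one has `H_L(Y|X_θ) = g₁(θ) − g₂(θ)` for
every `θ ≤ n`, and both `g₁` and `g₂` are nondecreasing in `θ`. -/
theorem condEntropy_decomposition {Ω 𝒳 𝒴 𝒜 : Type*} [Fintype Ω] [Fintype 𝒳]
    [Fintype 𝒴] [Fintype 𝒜] [Nonempty 𝒜]
    (L : 𝒴 → 𝒜 → ℝ) (b : (𝒴 → ℝ) → 𝒜) (hb : IsBayesSelector L b)
    (p : Ω → ℝ) (hp : ∀ ω, 0 ≤ p ω) (hsum : ∑ ω, p ω = 1)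
    (Y : Ω → 𝒴) (X : ℕ → Ω → 𝒳) (n : ℕ) :
    (∀ θ ≤ n,
      LcondEntropy L p Y (X θ)
        = (LcondEntropy L p Y (X 0)
            + ∑ k ∈ Finset.range θ, LCMI L b p Y (X k) (X (k + 1)))
          - ∑ k ∈ Finset.range θ, LCMI L b p Y (X (k + 1)) (X k))
    ∧ (∀ θ₁ θ₂, θ₁ ≤ θ₂ → θ₂ ≤ n →
        LcondEntropy L p Y (X 0)
            + ∑ k ∈ Finset.range θ₁, LCMI L b p Y (X k) (X (k + 1))
          ≤ LcondEntropy L p Y (X 0)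
            + ∑ k ∈ Finset.range θ₂, LCMI L b p Y (X k) (X (k + 1)))
    ∧ (∀ θ₁ θ₂, θ₁ ≤ θ₂ → θ₂ ≤ n →
        ∑ k ∈ Finset.range θ₁, LCMI L b p Y (X (k + 1)) (X k)
          ≤ ∑ k ∈ Finset.range θ₂, LCMI L b p Y (X (k + 1)) (X k)) :=
  condEntropy_decomposition_general L b hb p hp Y X n
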